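/- arXiv:math/0607397 — 5 statements merged into one kernel-verified Lean document; each statement's English description precedes it below -/
import Mathlib

section
/- Let 𝒮 be a nonempty family of subsets of X such that X∖Σ is dense in X for every Σ ∈ 𝒮, and such that 𝒮 is directed under inclusion (for all Σ, Σ' ∈ 𝒮 there exists Σ'' ∈ 𝒮 with Σ ∪ Σ' ⊆ Σ''). Then J_{L,𝒮}(X) ∩ U^∞_Λ(X) = {0}, and consequently the map ψ ↦ u(ψ) + J_{L,𝒮}(X) is an injective algebra homomorphism from C^∞(X) into the multi-foam algebra B_{L,𝒮}(X) := (C^∞(X))^Λ / J_{L,𝒮}(X). -/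
/-- The first-order partial derivative of `f` in the coordinate direction `i`. -/
noncomputable def pderiv1 (n : ℕ) (i : Fin n) (f : (Fin n → ℝ) → ℝ) :
    (Fin n → ℝ) → ℝ :=
  fun x => fderiv ℝ f x (Pi.single i 1)

/-- The multi-index partial derivative `D^p f` for a multi-index `p ∈ ℕⁿ`. -/
noncomputable def Dmulti (n : ℕ) (p : Fin n → ℕ) (f : (Fin n → ℝ) → ℝ) :
    (Fin n → ℝ) → ℝ :=
  (List.finRange n).foldr (fun i g => (pderiv1 n i)^[p i] g) f

/-- Membership in the set `J_{L,Σ}(X)`: a family `w = (w_λ)_{λ∈Λ}` belongs to it iff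
for every `x ∈ X∖Σ` there is `λ ∈ Λ` such that for all `μ ≥ λ` and all multi-indices
`p ∈ ℕⁿ` one has `(D^p w_μ)(x) = 0`. -/
def memJ {n : ℕ} {Λ : Type*} [Preorder Λ] (X Sg : Set (Fin n → ℝ))
    (w : Λ → (Fin n → ℝ) → ℝ) : Prop :=
  ∀ x ∈ X \ Sg, ∃ l : Λ, ∀ m : Λ, l ≤ m → ∀ p : Fin n → ℕ, Dmulti n p (w m) x = 0

/-- Membership in `J_{L,𝒮}(X) = ⋃_{Σ ∈ 𝒮} J_{L,Σ}(X)`. -/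
def memJS {n : ℕ} {Λ : Type*} [Preorder Λ] (X : Set (Fin n → ℝ))
    (SS : Set (Set (Fin n → ℝ))) (w : Λ → (Fin n → ℝ) → ℝ) : Prop :=
  ∃ Sg ∈ SS, memJ X Sg w

/-! A constant family `u(ψ)` in `J_{L,Σ}(X)` has, at each point of `X ∖ Σ`, some member whose
zeroth derivative vanishes there; as all members equal `ψ`, the function `ψ` vanishes on `X ∖ Σ`,
which is dense in `X`, so by continuity `ψ` vanishes on `X`. Injectivity follows by applying this
to `ψ - ψ'`. -/

open Set

theorem Dmulti_zero (n : ℕ) (f : (Fin n → ℝ) → ℝ) : Dmulti n 0 f = f := by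
  unfold Dmulti
  induction List.finRange n with
  | nil => rfl
  | cons i l ih => simpa only [List.foldr_cons, Pi.zero_apply, Function.iterate_zero, id] using ih

section ConstantFamily

variable {n : ℕ} {Λ : Type*} [Preorder Λ] {X : Set (Fin n → ℝ)} {ψ : (Fin n → ℝ) → ℝ}

theorem eqOn_zero_of_memJ_const {Sg : Set (Fin n → ℝ)} (h : memJ X Sg (fun _ : Λ => ψ)) :
    EqOn ψ 0 (X \ Sg) := fun y hy => by
  obtain ⟨l, hl⟩ := h y hy
  simpa only [Dmulti_zero, Pi.zero_apply] using hl l le_rfl 0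

theorem eqOn_zero_of_memJS_const {SS : Set (Set (Fin n → ℝ))}
    (hdense : ∀ Sg ∈ SS, X ⊆ closure (X \ Sg)) (hψ : ContinuousOn ψ X)
    (h : memJS X SS (fun _ : Λ => ψ)) : EqOn ψ 0 X := by
  obtain ⟨Sg, hSg, hJ⟩ := h
  exact (eqOn_zero_of_memJ_const hJ).of_subset_closure hψ continuousOn_const sdiff_subset
    (hdense Sg hSg)

end ConstantFamily

theorem stmt4_general (n : ℕ) (X : Set (Fin n → ℝ))
    (Λ : Type*) [PartialOrder Λ]
    (SS : Set (Set (Fin n → ℝ)))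
    (hSSdense : ∀ Sg ∈ SS, X ⊆ closure (X \ Sg)) :
    (∀ ψ : (Fin n → ℝ) → ℝ, ContDiffOn ℝ (⊤ : ℕ∞) ψ X →
      memJS X SS (fun _ : Λ => ψ) → ∀ x ∈ X, ψ x = 0)
    ∧ (∀ ψ ψ' : (Fin n → ℝ) → ℝ, ContDiffOn ℝ (⊤ : ℕ∞) ψ X →
        ContDiffOn ℝ (⊤ : ℕ∞) ψ' X →
        memJS X SS (fun _ : Λ => ψ - ψ') → ∀ x ∈ X, ψ x = ψ' x) := by
  refine ⟨fun ψ hψ hmem x hx => eqOn_zero_of_memJS_const hSSdense hψ.continuousOn hmem hx,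
    fun ψ ψ' hψ hψ' hmem x hx => ?_⟩
  rw [← sub_eq_zero]
  exact eqOn_zero_of_memJS_const hSSdense (hψ.sub hψ').continuousOn hmem hx

/-- Let `𝒮` be a nonempty family of subsets of `X`, each with dense
complement in `X`, directed under inclusion.  Then `J_{L,𝒮}(X) ∩ U^∞_Λ(X) = {0}`
(a constant family `u(ψ)` in `J_{L,𝒮}(X)` forces `ψ = 0` on `X`), and consequently
the map `ψ ↦ u(ψ) + J_{L,𝒮}(X)` from `C^∞(X)` to the multi-foam algebra
`B_{L,𝒮}(X) = (C^∞(X))^Λ / J_{L,𝒮}(X)` is injective (it is an algebra homomorphism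
by construction): if `u(ψ) - u(ψ') = u(ψ - ψ') ∈ J_{L,𝒮}(X)` then `ψ = ψ'` on `X`. -/
theorem stmt4 (n : ℕ) (X : Set (Fin n → ℝ)) (hX : IsOpen X) (hXne : X.Nonempty)
    (Λ : Type*) [PartialOrder Λ] (hdir : ∀ a b : Λ, ∃ c : Λ, a ≤ c ∧ b ≤ c)
    (SS : Set (Set (Fin n → ℝ))) (hSSne : SS.Nonempty) (hSSX : ∀ Sg ∈ SS, Sg ⊆ X)
    (hSSdense : ∀ Sg ∈ SS, X ⊆ closure (X \ Sg))
    (hSSdir : ∀ Sg ∈ SS, ∀ Sg' ∈ SS, ∃ Sg'' ∈ SS, Sg ∪ Sg' ⊆ Sg'') :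
    (∀ ψ : (Fin n → ℝ) → ℝ, ContDiffOn ℝ (⊤ : ℕ∞) ψ X →
      memJS X SS (fun _ : Λ => ψ) → ∀ x ∈ X, ψ x = 0)
    ∧ (∀ ψ ψ' : (Fin n → ℝ) → ℝ, ContDiffOn ℝ (⊤ : ℕ∞) ψ X →
        ContDiffOn ℝ (⊤ : ℕ∞) ψ' X →
        memJS X SS (fun _ : Λ => ψ - ψ') → ∀ x ∈ X, ψ x = ψ' x) :=
  stmt4_general n X Λ SS hSSdense
end

section
/- (Lemma 1) Let Σ ⊆ X and let S = (Σ_λ)_{λ∈Λ} and S' = (Σ'_λ)_{λ∈Λ} be two representations of Σ. Then I_{L,Σ,S}(X) = I_{L,Σ,S'}(X); that is, the set I_{L,Σ,S}(X) does not depend on the chosen representation of Σ, and may therefore be denoted I_{L,Σ}(X). -/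
/-- `S = (Σ_λ)_{λ∈Λ}` is a representation of `Σ ⊆ X`: each `Σ_λ` is a subset of `X`
with `X∖Σ_λ` open, and `Σ = limsup_{λ∈Λ} Σ_λ = ⋂_{λ∈Λ} ⋃_{μ≥λ} Σ_μ`. -/
def IsRepresentation {n : ℕ} {Λ : Type*} [Preorder Λ] (X Sg : Set (Fin n → ℝ))
    (S : Λ → Set (Fin n → ℝ)) : Prop :=
  (∀ l : Λ, S l ⊆ X) ∧ (∀ l : Λ, IsOpen (X \ S l)) ∧
    Sg = ⋂ l : Λ, ⋃ m : Λ, ⋃ _ : l ≤ m, S m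

/-- Membership in the set `I_{L,Σ,S}(X)`: for every `x ∈ X∖Σ` there is `λ ∈ Λ` such
that for all `μ ≥ λ` there is an open set `Δ_μ` with `x ∈ Δ_μ ⊆ X∖Σ_μ` and
`w_μ = 0` on `Δ_μ`. -/
def memI {n : ℕ} {Λ : Type*} [Preorder Λ] (X Sg : Set (Fin n → ℝ))
    (S : Λ → Set (Fin n → ℝ)) (w : Λ → (Fin n → ℝ) → ℝ) : Prop :=
  ∀ x ∈ X \ Sg, ∃ l : Λ, ∀ m : Λ, l ≤ m →
    ∃ Δ : Set (Fin n → ℝ), IsOpen Δ ∧ x ∈ Δ ∧ Δ ⊆ X \ S m ∧ ∀ y ∈ Δ, w m y = 0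

/-- Shrink each witness `Δ` to `Δ ∩ (X \ S' m)`: it is still open, and it still contains `x` for
large `m` because `x` lies outside the limsup of `S'`. -/
lemma memI_of_limsup_subset {n : ℕ} {Λ : Type*} [Preorder Λ] [IsDirected Λ (· ≤ ·)]
    {X Sg : Set (Fin n → ℝ)} {S S' : Λ → Set (Fin n → ℝ)}
    (hopen : ∀ l : Λ, IsOpen (X \ S' l))
    (hlimsup : ⋂ l : Λ, ⋃ m : Λ, ⋃ _ : l ≤ m, S' m ⊆ Sg)
    {w : Λ → (Fin n → ℝ) → ℝ} (h : memI X Sg S w) : memI X Sg S' w := by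
  intro x hx
  obtain ⟨l₁, h₁⟩ := h x hx
  obtain ⟨l₀, h₀⟩ : ∃ l₀ : Λ, ∀ m, l₀ ≤ m → x ∉ S' m := by
    have hx' : x ∉ ⋂ l : Λ, ⋃ m : Λ, ⋃ _ : l ≤ m, S' m := fun hmem => hx.2 (hlimsup hmem)
    simpa only [Set.mem_iInter, Set.mem_iUnion, not_forall, not_exists] using hx'
  obtain ⟨l, hl₀, hl₁⟩ := exists_ge_ge l₀ l₁
  refine ⟨l, fun m hm => ?_⟩
  obtain ⟨Δ, hΔ, hxΔ, -, hw⟩ := h₁ m (hl₁.trans hm)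
  exact ⟨Δ ∩ (X \ S' m), hΔ.inter (hopen m), ⟨hxΔ, hx.1, h₀ m (hl₀.trans hm)⟩,
    Set.inter_subset_right, fun y hy => hw y hy.1⟩

theorem stmt6_general (n : ℕ) (X : Set (Fin n → ℝ))
    (Λ : Type*) [PartialOrder Λ] (hdir : ∀ a b : Λ, ∃ c : Λ, a ≤ c ∧ b ≤ c)
    (Sg : Set (Fin n → ℝ))
    (S S' : Λ → Set (Fin n → ℝ))
    (hS : IsRepresentation X Sg S) (hS' : IsRepresentation X Sg S') :
    ∀ w : Λ → (Fin n → ℝ) → ℝ, memI X Sg S w ↔ memI X Sg S' w := by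
  have : IsDirected Λ (· ≤ ·) := ⟨hdir⟩
  exact fun w => ⟨memI_of_limsup_subset hS'.2.1 hS'.2.2.ge,
    memI_of_limsup_subset hS.2.1 hS.2.2.ge⟩

/-- Lemma 1: if `S` and `S'` are two representations of the same set
`Σ ⊆ X`, then `I_{L,Σ,S}(X) = I_{L,Σ,S'}(X)`; the set does not depend on the chosen
representation. -/
theorem stmt6 (n : ℕ) (X : Set (Fin n → ℝ)) (hX : IsOpen X) (hXne : X.Nonempty)
    (Λ : Type*) [PartialOrder Λ] (hdir : ∀ a b : Λ, ∃ c : Λ, a ≤ c ∧ b ≤ c)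
    (Sg : Set (Fin n → ℝ)) (hSg : Sg ⊆ X)
    (S S' : Λ → Set (Fin n → ℝ))
    (hS : IsRepresentation X Sg S) (hS' : IsRepresentation X Sg S') :
    ∀ w : Λ → (Fin n → ℝ) → ℝ, memI X Sg S w ↔ memI X Sg S' w :=
  stmt6_general n X Λ hdir Sg S S' hS hS'
end

section
/- (Lemma 2) Let Σ, Σ' ⊆ X each admit a representation, with representations S = (Σ_λ)_{λ∈Λ} of Σ and S' = (Σ'_λ)_{λ∈Λ} of Σ'. If Σ ⊆ Σ', then I_{L,Σ,S}(X) ⊆ I_{L,Σ',S'}(X). -/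
theorem exists_forall_ge_notMem_of_notMem_limsup {Λ α : Type*} [Preorder Λ]
    {S : Λ → Set α} {x : α} (hx : x ∉ ⋂ l : Λ, ⋃ m : Λ, ⋃ _ : l ≤ m, S m) :
    ∃ l, ∀ m, l ≤ m → x ∉ S m := by
  simpa using hx

theorem exists_forall_ge_and_of_directed {Λ : Type*} [Preorder Λ]
    (hdir : ∀ a b : Λ, ∃ c : Λ, a ≤ c ∧ b ≤ c) {P Q : Λ → Prop}
    (hP : ∃ a, ∀ m, a ≤ m → P m) (hQ : ∃ b, ∀ m, b ≤ m → Q m) :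
    ∃ c, ∀ m, c ≤ m → P m ∧ Q m := by
  obtain ⟨a, ha⟩ := hP
  obtain ⟨b, hb⟩ := hQ
  obtain ⟨c, hac, hbc⟩ := hdir a b
  exact ⟨c, fun m hcm => ⟨ha m (hac.trans hcm), hb m (hbc.trans hcm)⟩⟩

/-- Outside `Σ'` a point eventually avoids `Σ'_μ`; intersecting the neighbourhoods `Δ_μ`
given by `w ∈ I_{L,Σ,S}(X)` with the open sets `X ∖ Σ'_μ` then witnesses `w ∈ I_{L,Σ',S'}(X)`. -/
theorem memI_mono {n : ℕ} {Λ : Type*} [Preorder Λ] (hdir : ∀ a b : Λ, ∃ c : Λ, a ≤ c ∧ b ≤ c)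
    {X Sg Sg' : Set (Fin n → ℝ)} {S S' : Λ → Set (Fin n → ℝ)} {w : Λ → (Fin n → ℝ) → ℝ}
    (hS'open : ∀ m, IsOpen (X \ S' m)) (hS'lim : ⋂ l : Λ, ⋃ m : Λ, ⋃ _ : l ≤ m, S' m ⊆ Sg')
    (hsub : Sg ⊆ Sg') (hmem : memI X Sg S w) :
    memI X Sg' S' w := by
  rintro x ⟨hxX, hxSg'⟩
  obtain ⟨c, hc⟩ := exists_forall_ge_and_of_directed hdir (hmem x ⟨hxX, fun h => hxSg' (hsub h)⟩)
    (exists_forall_ge_notMem_of_notMem_limsup fun h => hxSg' (hS'lim h))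
  refine ⟨c, fun m hm => ?_⟩
  obtain ⟨⟨Δ, hΔopen, hxΔ, -, hwΔ⟩, hxS'⟩ := hc m hm
  exact ⟨Δ ∩ (X \ S' m), hΔopen.inter (hS'open m), ⟨hxΔ, hxX, hxS'⟩,
    Set.inter_subset_right, fun y hy => hwΔ y hy.1⟩

theorem stmt7_general (n : ℕ) (X : Set (Fin n → ℝ))
    (Λ : Type*) [PartialOrder Λ] (hdir : ∀ a b : Λ, ∃ c : Λ, a ≤ c ∧ b ≤ c)
    (Sg Sg' : Set (Fin n → ℝ))
    (S S' : Λ → Set (Fin n → ℝ))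
    (hS' : IsRepresentation X Sg' S')
    (hsub : Sg ⊆ Sg')
    (w : Λ → (Fin n → ℝ) → ℝ) (hmem : memI X Sg S w) :
    memI X Sg' S' w :=
  memI_mono hdir hS'.2.1 hS'.2.2.ge hsub hmem

/-- Lemma 2: if `S` is a representation of `Σ`, `S'` is a representation
of `Σ'`, and `Σ ⊆ Σ'`, then `I_{L,Σ,S}(X) ⊆ I_{L,Σ',S'}(X)`. -/
theorem stmt7 (n : ℕ) (X : Set (Fin n → ℝ)) (hX : IsOpen X) (hXne : X.Nonempty)
    (Λ : Type*) [PartialOrder Λ] (hdir : ∀ a b : Λ, ∃ c : Λ, a ≤ c ∧ b ≤ c)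
    (Sg Sg' : Set (Fin n → ℝ)) (hSg : Sg ⊆ X) (hSg' : Sg' ⊆ X)
    (S S' : Λ → Set (Fin n → ℝ))
    (hS : IsRepresentation X Sg S) (hS' : IsRepresentation X Sg' S')
    (hsub : Sg ⊆ Sg')
    (w : Λ → (Fin n → ℝ) → ℝ) (hmem : memI X Sg S w) :
    memI X Sg' S' w :=
  stmt7_general n X Λ hdir Sg Sg' S S' hS' hsub w hmem
end

section
/- Let Σ ⊆ X admit a representation S = (Σ_λ)_{λ∈Λ}. Then for every multi-index p ∈ ℕⁿ, the termwise p-th order partial derivation maps I_{L,Σ,S}(X) into itself: if w = (w_λ)_{λ∈Λ} ∈ I_{L,Σ,S}(X), then (D^p w_λ)_{λ∈Λ} ∈ I_{L,Σ,S}(X). -/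
lemma pderiv1_eqOn_zero {n : ℕ} {Δ : Set (Fin n → ℝ)} (hΔ : IsOpen Δ) (i : Fin n)
    {f : (Fin n → ℝ) → ℝ} (hf : Set.EqOn f 0 Δ) : Set.EqOn (pderiv1 n i f) 0 Δ := by
  intro y hy
  have hf_nhds : f =ᶠ[nhds y] fun _ => 0 := Filter.eventually_of_mem (hΔ.mem_nhds hy) hf
  simp [pderiv1, hf_nhds.fderiv_eq]

lemma Dmulti_eqOn_zero {n : ℕ} {Δ : Set (Fin n → ℝ)} (hΔ : IsOpen Δ) (p : Fin n → ℕ)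
    {f : (Fin n → ℝ) → ℝ} (hf : Set.EqOn f 0 Δ) : Set.EqOn (Dmulti n p f) 0 Δ := by
  unfold Dmulti
  induction List.finRange n with
  | nil => exact hf
  | cons i L ih =>
    exact Function.Iterate.rec (fun g => Set.EqOn g 0 Δ) ih
      (fun _ => pderiv1_eqOn_zero hΔ i) (p i)

theorem stmt9_general (n : ℕ) (X : Set (Fin n → ℝ))
    (Λ : Type*) [PartialOrder Λ]
    (Sg : Set (Fin n → ℝ))
    (S : Λ → Set (Fin n → ℝ))
    (w : Λ → (Fin n → ℝ) → ℝ)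
    (hmem : memI X Sg S w) (p : Fin n → ℕ) :
    memI X Sg S (fun l => Dmulti n p (w l)) := by
  intro x hx
  obtain ⟨l, hl⟩ := hmem x hx
  refine ⟨l, fun m hm => ?_⟩
  obtain ⟨Δ, hΔ, hxΔ, hΔS, hwΔ⟩ := hl m hm
  exact ⟨Δ, hΔ, hxΔ, hΔS, Dmulti_eqOn_zero hΔ p hwΔ⟩

/-- if `Σ ⊆ X` admits a representation `S`, then for every multi-index
`p ∈ ℕⁿ` the termwise `p`-th order partial derivation maps `I_{L,Σ,S}(X)` into itself. -/
theorem stmt9 (n : ℕ) (X : Set (Fin n → ℝ)) (hX : IsOpen X) (hXne : X.Nonempty)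
    (Λ : Type*) [PartialOrder Λ] (hdir : ∀ a b : Λ, ∃ c : Λ, a ≤ c ∧ b ≤ c)
    (Sg : Set (Fin n → ℝ)) (hSg : Sg ⊆ X)
    (S : Λ → Set (Fin n → ℝ)) (hS : IsRepresentation X Sg S)
    (w : Λ → (Fin n → ℝ) → ℝ) (hw : ∀ l, ContDiffOn ℝ (⊤ : ℕ∞) (w l) X)
    (hmem : memI X Sg S w) (p : Fin n → ℕ) :
    memI X Sg S (fun l => Dmulti n p (w l)) :=
  stmt9_general n X Λ Sg S w hmem p
end

section
/- Let 𝒮_L be a nonempty family of subsets of X such that every Σ ∈ 𝒮_L admits a representation and X∖Σ is dense in X for every Σ ∈ 𝒮_L. Then I_{L,𝒮_L}(X) ∩ U^∞_Λ(X) = {0}: if ψ ∈ C^∞(X) and the constant family u(ψ) belongs to I_{L,Σ}(X) for some Σ ∈ 𝒮_L, then ψ = 0 on X. -/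
/-- Membership in `I_{L,𝒮_L}(X) = ⋃_{Σ ∈ 𝒮_L} I_{L,Σ}(X)`. -/
def memIS {n : ℕ} {Λ : Type*} [Preorder Λ] (X : Set (Fin n → ℝ))
    (SS : Set (Set (Fin n → ℝ))) (w : Λ → (Fin n → ℝ) → ℝ) : Prop :=
  ∃ Sg ∈ SS, ∃ S : Λ → Set (Fin n → ℝ), IsRepresentation X Sg S ∧ memI X Sg S w

theorem eqOn_zero_of_memI_const {n : ℕ} {Λ : Type*} [Preorder Λ] {X Sg : Set (Fin n → ℝ)}
    {S : Λ → Set (Fin n → ℝ)} {f : (Fin n → ℝ) → ℝ} (h : memI X Sg S (fun _ : Λ => f)) :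
    Set.EqOn f 0 (X \ Sg) := by
  intro x hx
  obtain ⟨l, hl⟩ := h x hx
  obtain ⟨Δ, -, hxΔ, -, hΔ⟩ := hl l le_rfl
  exact hΔ x hxΔ

theorem stmt12_general (n : ℕ) (X : Set (Fin n → ℝ))
    (Λ : Type*) [PartialOrder Λ]
    (SS : Set (Set (Fin n → ℝ)))
    (hSSdense : ∀ Sg ∈ SS, X ⊆ closure (X \ Sg))
    (ψ : (Fin n → ℝ) → ℝ) (hψ : ContDiffOn ℝ (⊤ : ℕ∞) ψ X)
    (hmem : memIS X SS (fun _ : Λ => ψ)) :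
    ∀ x ∈ X, ψ x = 0 := by
  obtain ⟨Sg, hSg, S, -, hI⟩ := hmem
  exact (eqOn_zero_of_memI_const hI).of_subset_closure hψ.continuousOn continuousOn_const
    Set.sdiff_subset (hSSdense Sg hSg)

/-- if every `Σ ∈ 𝒮_L` admits a representation and has dense complement
`X∖Σ` in `X`, then `I_{L,𝒮_L}(X) ∩ U^∞_Λ(X) = {0}`: if `ψ ∈ C^∞(X)` and the constant
family `u(ψ)` belongs to `I_{L,Σ}(X)` for some `Σ ∈ 𝒮_L`, then `ψ = 0` on `X`. -/
theorem stmt12 (n : ℕ) (X : Set (Fin n → ℝ)) (hX : IsOpen X) (hXne : X.Nonempty)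
    (Λ : Type*) [PartialOrder Λ] (hdir : ∀ a b : Λ, ∃ c : Λ, a ≤ c ∧ b ≤ c)
    (SS : Set (Set (Fin n → ℝ))) (hSSne : SS.Nonempty)
    (hSSrep : ∀ Sg ∈ SS, ∃ S : Λ → Set (Fin n → ℝ), IsRepresentation X Sg S)
    (hSSdense : ∀ Sg ∈ SS, X ⊆ closure (X \ Sg))
    (ψ : (Fin n → ℝ) → ℝ) (hψ : ContDiffOn ℝ (⊤ : ℕ∞) ψ X)
    (hmem : memIS X SS (fun _ : Λ => ψ)) :
    ∀ x ∈ X, ψ x = 0 :=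
  stmt12_general n X Λ SS hSSdense ψ hψ hmem
end
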